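/- There exists a 3-way 6-homogeneous (15,3,2) Steiner trade of volume 30. Explicitly, with B_2 the 30 triples {36f,15e,24a,7bc,89d,9cf,147,2be,38a,56d,7af,16c,258,3bd,49e,4df,18b,269,37e,5ac,8ef,1ad,23c,46b,579,5bf,139,27d,48c,6ae} on {1,...,9,a,...,f} and π = (6 7 8)(9 b a)(c d e), the collections B_2, π(B_2), π(π(B_2)) are pairwise disjoint and form such a trade. -/
import Mathlib


open Finset

/-- The foundation of a collection of block systems: all points occurring in some block. -/
def foundT {μ : ℕ} (T : Fin μ → Finset (Finset ℕ)) : Finset ℕ :=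
  (Finset.univ.biUnion T).biUnion id

/-- `T` is a μ-way (v,k,t) trade of volume `m` on the point set `V`:
μ pairwise disjoint collections of `m` blocks (k-subsets of `V`) such that every
t-subset of `V` occurs in the same number of blocks of each collection. -/
def IsMuTrade (μ : ℕ) (V : Finset ℕ) (k t m : ℕ)
    (T : Fin μ → Finset (Finset ℕ)) : Prop :=
  0 < m ∧
  (∀ i, (T i).card = m) ∧
  (∀ i, ∀ b ∈ T i, b ⊆ V ∧ b.card = k) ∧
  (∀ i j, i ≠ j → Disjoint (T i) (T j)) ∧
  (∀ s : Finset ℕ, s ⊆ V → s.card = t → ∀ i j,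
    ((T i).filter (fun b => s ⊆ b)).card =
      ((T j).filter (fun b => s ⊆ b)).card)

/-- Steiner condition: every t-subset of the foundation occurs at most once in each `T i`. -/
def IsSteinerT {μ : ℕ} (t : ℕ) (T : Fin μ → Finset (Finset ℕ)) : Prop :=
  ∀ i, ∀ s : Finset ℕ, s ⊆ foundT T → s.card = t →
    ((T i).filter (fun b => s ⊆ b)).card ≤ 1

/-- d-homogeneity: every element of the foundation occurs in exactly `d` blocks of each `T i`. -/
def IsHomog {μ : ℕ} (d : ℕ) (T : Fin μ → Finset (Finset ℕ)) : Prop :=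
  ∀ x ∈ foundT T, ∀ i, ((T i).filter (fun b => x ∈ b)).card = d

/-- A 3-way d-homogeneous (v,3,2) Steiner trade of volume `m`. -/
def Is3Steiner (d v m : ℕ) (T : Fin 3 → Finset (Finset ℕ)) : Prop :=
  IsMuTrade 3 (foundT T) 3 2 m T ∧ IsSteinerT 2 T ∧ IsHomog d T ∧
    (foundT T).card = v

/-- The permutation π = (6 7 8)(9 b a)(c d e) on points {1,…,9,a,…,f}, encoded
with a = 10, b = 11, c = 12, d = 13, e = 14, f = 15. -/
def piPerm : ℕ → ℕ := fun n =>
  if n = 6 then 7 else if n = 7 then 8 else if n = 8 then 6 else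
  if n = 9 then 11 else if n = 11 then 10 else if n = 10 then 9 else
  if n = 12 then 13 else if n = 13 then 14 else if n = 14 then 12 else n

/-- The explicit block set B₂ of 30 triples on {1,…,9,a,…,f}. -/
def B2 : Finset (Finset ℕ) :=
  {{3,6,15},{1,5,14},{2,4,10},{7,11,12},{8,9,13},
   {9,12,15},{1,4,7},{2,11,14},{3,8,10},{5,6,13},
   {7,10,15},{1,6,12},{2,5,8},{3,11,13},{4,9,14},
   {4,13,15},{1,8,11},{2,6,9},{3,7,14},{5,10,12},
   {8,14,15},{1,10,13},{2,3,12},{4,6,11},{5,7,9},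
   {5,11,15},{1,3,9},{2,7,13},{4,8,12},{6,10,14}}


lemma pair_forall {V : Finset ℕ} {P : Finset ℕ → Prop}
    (h : ∀ x ∈ V, ∀ y ∈ V, x ≠ y → P {x, y}) :
    ∀ s : Finset ℕ, s ⊆ V → s.card = 2 → P s := by
  intro s hs hc
  obtain ⟨x, y, hxy, rfl⟩ := Finset.card_eq_two.1 hc
  exact h x (hs (by simp)) y (hs (by simp)) hxy


set_option maxRecDepth 1000000 in
set_option maxHeartbeats 4000000 in
/-- B₂, π(B₂), π(π(B₂)) form a 3-way 6-homogeneous (15,3,2)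
Steiner trade of volume 30 (in particular they are pairwise disjoint). -/
theorem stmt17 :
    Is3Steiner 6 15 30
      ![B2, B2.image (Finset.image piPerm),
        (B2.image (Finset.image piPerm)).image (Finset.image piPerm)] := by
  refine ⟨⟨by norm_num, by decide, by decide, by decide, ?_⟩, ?_, ?_, by decide⟩
  · exact pair_forall (P := fun s => ∀ i j : Fin 3,
      ((![B2, B2.image (Finset.image piPerm),
        (B2.image (Finset.image piPerm)).image (Finset.image piPerm)] i).filter
          (fun b => s ⊆ b)).card =
      ((![B2, B2.image (Finset.image piPerm),
        (B2.image (Finset.image piPerm)).image (Finset.image piPerm)] j).filter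
          (fun b => s ⊆ b)).card) (by decide)
  · intro i
    exact pair_forall (P := fun s =>
      ((![B2, B2.image (Finset.image piPerm),
        (B2.image (Finset.image piPerm)).image (Finset.image piPerm)] i).filter
          (fun b => s ⊆ b)).card ≤ 1) (by revert i; decide)
  · unfold IsHomog
    decide
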